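/- For every α > 0 and r ≥ 0 there exists a constant C such that for all k ∈ ℝ and t ≥ 1, e^{Λ₋(k)(t−1)} μ_{α,r}(k,t) ≤ C · μ_{α,2}(k,t), where Λ₋(k) = −(1/2)√(2√(k²+k⁴)+2k²) and μ_{α,r}(k,t) = 1/(1+(|k|t^r)^α). -/
import Mathlib

noncomputable def mu (α r k t : ℝ) : ℝ := 1 / (1 + (|k| * t ^ r) ^ α)

noncomputable def LamMinus (k : ℝ) : ℝ := -(1/2) * Real.sqrt (2 * Real.sqrt (k^2 + k^4) + 2 * k^2)

lemma rpow_mul_exp_neg_le {β : ℝ} (hβ : 0 < β) {y : ℝ} (hy : 0 ≤ y) :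
    y ^ β * Real.exp (-y) ≤ β ^ β := by
  rcases eq_or_lt_of_le hy with h | h
  · rw [← h, Real.zero_rpow hβ.ne']
    simpa using (Real.rpow_pos_of_pos hβ β).le
  · have h1 : y / β ≤ Real.exp (y / β - 1) := by
      have := Real.add_one_le_exp (y / β - 1); linarith
    have h2 : y ^ β ≤ β ^ β * Real.exp (y - β) := by
      have hyβ : y = β * (y / β) := by field_simp
      calc y ^ β = (β * (y / β)) ^ β := by rw [← hyβ]
        _ = β ^ β * (y / β) ^ β := Real.mul_rpow hβ.le (by positivity)
        _ ≤ β ^ β * Real.exp (y / β - 1) ^ β := by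
            gcongr
        _ = β ^ β * Real.exp (y - β) := by
            rw [Real.rpow_def_of_pos (Real.exp_pos _), Real.log_exp]
            congr 1
            field_simp
    calc y ^ β * Real.exp (-y) ≤ β ^ β * Real.exp (y - β) * Real.exp (-y) := by
          gcongr
        _ = β ^ β * Real.exp (-β) := by rw [mul_assoc, ← Real.exp_add]; ring_nf
        _ ≤ β ^ β * 1 := by gcongr; exact Real.exp_le_one_iff.mpr (by linarith)
        _ = β ^ β := mul_one _

lemma one_add_rpow_le {β s : ℝ} (hβ : 0 ≤ β) (hs : 0 ≤ s) :
    (1 + s) ^ β ≤ 2 ^ β * (1 + s ^ β) := by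
  rcases le_total s 1 with h | h
  · calc (1 + s) ^ β ≤ 2 ^ β := by
          apply Real.rpow_le_rpow (by linarith) (by linarith) hβ
      _ = 2 ^ β * 1 := (mul_one _).symm
      _ ≤ 2 ^ β * (1 + s ^ β) := by
          have := Real.rpow_nonneg hs β
          gcongr
          linarith
  · calc (1 + s) ^ β ≤ (2 * s) ^ β := by
          apply Real.rpow_le_rpow (by linarith) (by linarith) hβ
      _ = 2 ^ β * s ^ β := Real.mul_rpow (by norm_num) hs
      _ ≤ 2 ^ β * (1 + s ^ β) := by gcongr; linarith

lemma sqrt_four' : Real.sqrt 4 = 2 := by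
  rw [show (4:ℝ) = 2^2 by norm_num, Real.sqrt_sq]; norm_num

lemma lam_le_neg_abs (k : ℝ) : LamMinus k ≤ -|k| := by
  unfold LamMinus
  have h1 : Real.sqrt (k^4) ≤ Real.sqrt (k^2 + k^4) := by
    apply Real.sqrt_le_sqrt; nlinarith [sq_nonneg k]
  have h2 : Real.sqrt (k^4) = k^2 := by
    rw [show k^4 = (k^2)^2 by ring, Real.sqrt_sq (sq_nonneg k)]
  have hk : k^2 ≤ Real.sqrt (k^2 + k^4) := le_trans (le_of_eq h2.symm) h1
  have h3 : (2*|k|)^2 ≤ 2 * Real.sqrt (k^2 + k^4) + 2 * k^2 := by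
    have habs : |k|^2 = k^2 := sq_abs k
    nlinarith
  have h4 : 2*|k| ≤ Real.sqrt (2 * Real.sqrt (k^2 + k^4) + 2 * k^2) := by
    calc 2*|k| = Real.sqrt ((2*|k|)^2) := (Real.sqrt_sq (by positivity)).symm
      _ ≤ _ := Real.sqrt_le_sqrt h3
  nlinarith [abs_nonneg k]

lemma lam_le_neg_sqrt (k : ℝ) : LamMinus k ≤ -Real.sqrt (|k|/2) := by
  unfold LamMinus
  have h1 : Real.sqrt (k^2) ≤ Real.sqrt (k^2 + k^4) := by
    apply Real.sqrt_le_sqrt; nlinarith [sq_nonneg (k^2)]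
  have hk : |k| ≤ Real.sqrt (k^2 + k^4) := le_trans (le_of_eq (Real.sqrt_sq_eq_abs k).symm) h1
  have h3 : |k|/2 ≤ (2 * Real.sqrt (k^2 + k^4) + 2 * k^2)/4 := by
    nlinarith [sq_nonneg k]
  have h4 : Real.sqrt (|k|/2) ≤ Real.sqrt ((2 * Real.sqrt (k^2 + k^4) + 2 * k^2)/4) :=
    Real.sqrt_le_sqrt h3
  have h5 : Real.sqrt ((2 * Real.sqrt (k^2 + k^4) + 2 * k^2)/4) =
      Real.sqrt (2 * Real.sqrt (k^2 + k^4) + 2 * k^2) / 2 := by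
    rw [Real.sqrt_div (by positivity) 4, sqrt_four']
  rw [h5] at h4
  linarith

lemma main_est (α : ℝ) (hα : 0 < α) (k t : ℝ) (ht : 1 ≤ t) :
    Real.exp (LamMinus k * (t - 1)) * (1 + (|k| * t ^ (2:ℝ)) ^ α) ≤
      (1 + ((2:ℝ) ^ (2*α) * (1 + (2*α) ^ (2*α)) + 2 ^ (2*α) * (1 + 2 ^ (2*α) * (2*α) ^ (2*α))))
        * (1 + |k| ^ α) := by
  have hβ : 0 < 2*α := by positivity
  have hx0 : (0:ℝ) ≤ |k| := abs_nonneg k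
  have hs0 : (0:ℝ) ≤ t - 1 := by linarith
  have ht0 : (0:ℝ) < t := by linarith
  set β := 2*α with hβdef
  set x := |k| with hxdef
  set s := t - 1 with hsdef
  have hts : t = 1 + s := by rw [hsdef]; ring
  set K1 := (2:ℝ) ^ β * (1 + β ^ β) with hK1
  set K2 := (2:ℝ) ^ β * (1 + 2 ^ β * β ^ β) with hK2
  have hK1pos : 0 < K1 := by
    have : (0:ℝ) < β ^ β := Real.rpow_pos_of_pos hβ β
    positivity
  have hK2pos : 0 < K2 := by
    have : (0:ℝ) < β ^ β := Real.rpow_pos_of_pos hβ β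
    positivity
  have hxα : (0:ℝ) ≤ x ^ α := Real.rpow_nonneg hx0 α
  have hxt : (x * t ^ (2:ℝ)) ^ α = x ^ α * t ^ β := by
    rw [Real.mul_rpow hx0 (Real.rpow_nonneg ht0.le _), ← Real.rpow_mul ht0.le]
  have hexp1 : Real.exp (LamMinus k * s) ≤ 1 := by
    apply Real.exp_le_one_iff.mpr
    have h := lam_le_neg_abs k
    nlinarith
  have hE : Real.exp (LamMinus k * s) * (x ^ α * t ^ β) ≤ (K1 + K2) * (1 + x ^ α) := by
    rcases le_total 1 x with hx1 | hx1
    · -- x ≥ 1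
      have hLs : LamMinus k * s ≤ -s := by
        have h := lam_le_neg_abs k
        nlinarith
      have hexp : Real.exp (LamMinus k * s) ≤ Real.exp (-s) := Real.exp_le_exp.mpr hLs
      have htβ : t ^ β ≤ 2 ^ β * (1 + s ^ β) := by
        rw [hts]; exact one_add_rpow_le hβ.le hs0
      have h1 : Real.exp (-s) ≤ 1 := Real.exp_le_one_iff.mpr (by linarith)
      have h2 : s ^ β * Real.exp (-s) ≤ β ^ β := rpow_mul_exp_neg_le hβ hs0
      have hsβ : (0:ℝ) ≤ s ^ β := Real.rpow_nonneg hs0 β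
      calc Real.exp (LamMinus k * s) * (x ^ α * t ^ β)
          ≤ Real.exp (-s) * (x ^ α * (2 ^ β * (1 + s ^ β))) :=
            mul_le_mul hexp (mul_le_mul_of_nonneg_left htβ hxα)
              (mul_nonneg hxα (Real.rpow_nonneg ht0.le β)) (Real.exp_pos _).le
        _ = 2 ^ β * x ^ α * (Real.exp (-s) + s ^ β * Real.exp (-s)) := by ring
        _ ≤ 2 ^ β * x ^ α * (1 + β ^ β) := by
            have h2b : (0:ℝ) ≤ 2 ^ β * x ^ α := by positivity
            apply mul_le_mul_of_nonneg_left _ h2b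
            linarith
        _ = K1 * x ^ α := by rw [hK1]; ring
        _ ≤ K1 * (1 + x ^ α) := mul_le_mul_of_nonneg_left (by linarith) hK1pos.le
        _ ≤ (K1 + K2) * (1 + x ^ α) := mul_le_mul_of_nonneg_right (by linarith) (by linarith)
    · -- x ≤ 1
      set w := Real.sqrt (x/2) with hw
      have hw0 : (0:ℝ) ≤ w := Real.sqrt_nonneg _
      have hLs : LamMinus k * s ≤ -(w*s) := by
        have h := lam_le_neg_sqrt k
        nlinarith
      have hexp : Real.exp (LamMinus k * s) ≤ Real.exp (-(w*s)) := Real.exp_le_exp.mpr hLs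
      have hsx1 : Real.sqrt x ≤ 1 := Real.sqrt_le_one.mpr hx1
      have hsx0 : (0:ℝ) ≤ Real.sqrt x := Real.sqrt_nonneg x
      have hxαt : x ^ α * t ^ β = (Real.sqrt x * (1+s)) ^ β := by
        rw [Real.mul_rpow hsx0 (by linarith : (0:ℝ) ≤ 1+s), Real.sqrt_eq_rpow,
          ← Real.rpow_mul hx0, show (1/2)*β = α by rw [hβdef]; ring, hts]
      have hbase : Real.sqrt x * (1+s) ≤ 1 + Real.sqrt x * s := by nlinarith
      have hsplit : (Real.sqrt x * (1+s)) ^ β ≤ 2 ^ β * (1 + (Real.sqrt x * s) ^ β) := by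
        calc (Real.sqrt x * (1+s)) ^ β ≤ (1 + Real.sqrt x * s) ^ β :=
              Real.rpow_le_rpow (by positivity) hbase hβ.le
          _ ≤ 2 ^ β * (1 + (Real.sqrt x * s) ^ β) := one_add_rpow_le hβ.le (by positivity)
      have hsq2 : Real.sqrt x = Real.sqrt 2 * w := by
        rw [hw, ← Real.sqrt_mul (by norm_num : (0:ℝ) ≤ 2)]
        congr 1; ring
      have hws : (Real.sqrt x * s) ^ β = (Real.sqrt 2) ^ β * (w * s) ^ β := by
        rw [hsq2, mul_assoc, Real.mul_rpow (Real.sqrt_nonneg 2) (by positivity)]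
      have h2le : (Real.sqrt 2 : ℝ) ^ β ≤ 2 ^ β := by
        apply Real.rpow_le_rpow (Real.sqrt_nonneg 2) _ hβ.le
        calc Real.sqrt 2 ≤ Real.sqrt 4 := Real.sqrt_le_sqrt (by norm_num)
          _ = 2 := sqrt_four'
      have hwsβ : (w*s) ^ β * Real.exp (-(w*s)) ≤ β ^ β := rpow_mul_exp_neg_le hβ (mul_nonneg hw0 hs0)
      have hexp1' : Real.exp (-(w*s)) ≤ 1 :=
        Real.exp_le_one_iff.mpr (neg_nonpos.mpr (mul_nonneg hw0 hs0))
      have hwsβ0 : (0:ℝ) ≤ (w*s) ^ β := Real.rpow_nonneg (by positivity) β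
      have hsqβ0 : (0:ℝ) ≤ (Real.sqrt 2 : ℝ) ^ β := Real.rpow_nonneg (Real.sqrt_nonneg 2) β
      have h2β0 : (0:ℝ) < (2:ℝ) ^ β := Real.rpow_pos_of_pos (by norm_num) β
      have hββ0 : (0:ℝ) < β ^ β := Real.rpow_pos_of_pos hβ β
      calc Real.exp (LamMinus k * s) * (x ^ α * t ^ β)
          = Real.exp (LamMinus k * s) * (Real.sqrt x * (1+s)) ^ β := by rw [hxαt]
        _ ≤ Real.exp (-(w*s)) * (2 ^ β * (1 + (Real.sqrt x * s) ^ β)) :=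
            mul_le_mul hexp hsplit
              (Real.rpow_nonneg (mul_nonneg hsx0 (by linarith)) β) (Real.exp_pos _).le
        _ = 2 ^ β * (Real.exp (-(w*s)) + (Real.sqrt 2) ^ β * ((w*s) ^ β * Real.exp (-(w*s)))) := by
            rw [hws]; ring
        _ ≤ 2 ^ β * (1 + 2 ^ β * β ^ β) := by
            apply mul_le_mul_of_nonneg_left _ h2β0.le
            have : (Real.sqrt 2 : ℝ) ^ β * ((w*s) ^ β * Real.exp (-(w*s))) ≤ 2 ^ β * β ^ β := by
              apply mul_le_mul h2le hwsβ (by positivity) h2β0.le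
            linarith
        _ = K2 := by rw [hK2]
        _ = K2 * 1 := (mul_one _).symm
        _ ≤ K2 * (1 + x ^ α) := mul_le_mul_of_nonneg_left (by linarith) hK2pos.le
        _ ≤ (K1 + K2) * (1 + x ^ α) := mul_le_mul_of_nonneg_right (by linarith) (by linarith)
  calc Real.exp (LamMinus k * s) * (1 + (x * t ^ (2:ℝ)) ^ α)
      = Real.exp (LamMinus k * s) + Real.exp (LamMinus k * s) * (x ^ α * t ^ β) := by
        rw [hxt]; ring
    _ ≤ 1 + (K1 + K2) * (1 + x ^ α) := by
        have := Real.exp_pos (LamMinus k * s)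
        linarith
    _ ≤ (1 + (K1 + K2)) * (1 + x ^ α) := by
        have hexpand : (1+(K1+K2))*(1+x^α) = (1+x^α) + (K1+K2)*(1+x^α) := by ring
        rw [hexpand]
        linarith

theorem exp_Lam_mul_mu_le (α r : ℝ) (hα : 0 < α) (hr : 0 ≤ r) :
    ∃ C : ℝ, ∀ k t : ℝ, 1 ≤ t →
      Real.exp (LamMinus k * (t - 1)) * mu α r k t ≤ C * mu α 2 k t := by
  set C := (1 + ((2:ℝ) ^ (2*α) * (1 + (2*α) ^ (2*α)) + 2 ^ (2*α) * (1 + 2 ^ (2*α) * (2*α) ^ (2*α)))) with hC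
  have hβ : (0:ℝ) < (2*α) ^ (2*α) := Real.rpow_pos_of_pos (by positivity) _
  have hCpos : 0 < C := by rw [hC]; positivity
  refine ⟨C, fun k t ht => ?_⟩
  have ht0 : (0:ℝ) < t := by linarith
  have hx0 : (0:ℝ) ≤ |k| := abs_nonneg k
  have hP : (0:ℝ) < 1 + (|k| * t ^ r) ^ α := by positivity
  have hQ : (0:ℝ) < 1 + (|k| * t ^ (2:ℝ)) ^ α := by positivity
  have htr : (1:ℝ) ≤ t ^ r := Real.one_le_rpow ht hr
  have hR : 1 + |k| ^ α ≤ 1 + (|k| * t ^ r) ^ α := by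
    have : |k| ^ α ≤ (|k| * t ^ r) ^ α := by
      apply Real.rpow_le_rpow hx0 _ hα.le
      nlinarith
    linarith
  have hmain := main_est α hα k t ht
  unfold mu
  rw [mul_one_div, mul_one_div, div_le_div_iff₀ hP hQ]
  calc Real.exp (LamMinus k * (t - 1)) * (1 + (|k| * t ^ (2:ℝ)) ^ α)
      ≤ C * (1 + |k| ^ α) := hmain
    _ ≤ C * (1 + (|k| * t ^ r) ^ α) := mul_le_mul_of_nonneg_left hR hCpos.le
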